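/- Let M > 0 and let α, N₀, q, V > 0. Define N_M(v,t) = N(v_M, t) where v_M(s) = sgn(v(s))min(|v(s)|, M) is the pointwise cutoff and N is given by the explicit variation-of-constants formula for the pore density ODE. Then there exists L = L(M) such that for all continuous v₁, v₂ : [0,T] → ℝ and all t ∈ [0,T], |N_M(v₁,t) − N_M(v₂,t)|² ≤ L ∫₀ᵗ |v₁(s) − v₂(s)|² ds. -/

import Mathlib

/-!
`Npore` is the variation-of-constants solution `e^{-∫₀ᵗ g} N₀ + ∫₀ᵗ f(s) e^{-∫ₛᵗ g} ds` of
`N' = f - g N`, where `f = α e^{(v/V)²}` and `g = (α/N₀) e^{(1-q)(v/V)²} ≥ 0`. Since `x ↦ e^{-x}`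
is 1-Lipschitz on `[0, ∞)`, two such solutions differ by at most
`(|N₀| + t sup |f₁|) ∫₀ᵗ |g₁ - g₂| + ∫₀ᵗ |f₁ - f₂|`. After the cutoff, `f` and `g` are
Lipschitz in `v` (they are `C¹` on the compact interval `[-M, M]` and the cutoff is
1-Lipschitz) and bounded, which gives an `L¹` bound in `v₁ - v₂`; Cauchy–Schwarz on `[0, t]`
turns it into the `L²` bound.
-/

open MeasureTheory intervalIntegral

/-- Pore density from the Neu–Krassowska model, given by the
variation-of-constants formula. -/
noncomputable def Npore (α N₀ q V : ℝ) (v : ℝ → ℝ) (t : ℝ) : ℝ :=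
  Real.exp (-∫ τ in (0:ℝ)..t, (α / N₀) * Real.exp ((1 - q) * (v τ / V) ^ 2)) * N₀ +
    ∫ s in (0:ℝ)..t, α * Real.exp ((v s / V) ^ 2) *
      Real.exp (-∫ τ in s..t, (α / N₀) * Real.exp ((1 - q) * (v τ / V) ^ 2))

/-- The cutoff at level `M`: `v_M = sgn(v) · min(|v|, M)`. -/
noncomputable def cut (M v : ℝ) : ℝ := Real.sign v * min |v| M

open Real Set

lemma cut_eq_max_min {M : ℝ} (hM : 0 ≤ M) (x : ℝ) : cut M x = max (-M) (min M x) := by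
  rcases lt_trichotomy x 0 with hx | rfl | hx
  · rw [cut, Real.sign_of_neg hx, abs_of_neg hx]
    rcases le_total (-x) M with h | h
    · rw [min_eq_left h, min_eq_right (by linarith), max_eq_right (by linarith)]; ring
    · rw [min_eq_right h, min_eq_right (by linarith), max_eq_left (by linarith)]; ring
  · simp [cut, hM]
  · rw [cut, Real.sign_of_pos hx, abs_of_pos hx, one_mul, min_comm,
      max_eq_right (by linarith [le_min hM hx.le])]

lemma cut_mem_Icc {M : ℝ} (hM : 0 ≤ M) (x : ℝ) : cut M x ∈ Icc (-M) M := by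
  rw [cut_eq_max_min hM]
  exact ⟨le_max_left _ _, max_le (by linarith) (min_le_left _ _)⟩

lemma lipschitzWith_cut {M : ℝ} (hM : 0 ≤ M) : LipschitzWith 1 (cut M) := by
  rw [funext (cut_eq_max_min hM)]
  exact (LipschitzWith.id.const_min M).const_max (-M)

lemma exists_lipschitzWith_comp_cut {M : ℝ} (hM : 0 ≤ M) {φ : ℝ → ℝ} (hφ : ContDiff ℝ 1 φ) :
    ∃ K, LipschitzWith K (fun x => φ (cut M x)) := by
  obtain ⟨K, hK⟩ := hφ.contDiffOn.exists_lipschitzOnWith one_ne_zero (convex_Icc (-M) M)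
    isCompact_Icc
  refine ⟨K, LipschitzWith.of_dist_le_mul fun x y => ?_⟩
  calc dist (φ (cut M x)) (φ (cut M y)) ≤ K * dist (cut M x) (cut M y) :=
        hK.dist_le_mul _ (cut_mem_Icc hM x) _ (cut_mem_Icc hM y)
    _ ≤ K * dist x y := by
        gcongr
        simpa using (lipschitzWith_cut hM).dist_le_mul x y

lemma exists_bound_comp_cut {M : ℝ} (hM : 0 ≤ M) {φ : ℝ → ℝ} (hφ : Continuous φ) :
    ∃ F, ∀ x, |φ (cut M x)| ≤ F := by
  obtain ⟨F, hF⟩ := isCompact_Icc.exists_bound_of_continuousOn (s := Icc (-M) M) hφ.continuousOn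
  exact ⟨F, fun x => hF _ (cut_mem_Icc hM x)⟩

lemma abs_exp_neg_sub_exp_neg_le {a b : ℝ} (ha : 0 ≤ a) (hb : 0 ≤ b) :
    |exp (-a) - exp (-b)| ≤ |a - b| := by
  wlog hab : b ≤ a generalizing a b
  · rw [abs_sub_comm, abs_sub_comm a]; exact this hb ha (le_of_not_ge hab)
  have hexp : exp (-a) = exp (-b) * exp (-(a - b)) := by rw [← exp_add]; ring_nf
  rw [abs_of_nonpos (by rw [sub_nonpos]; exact exp_le_exp.2 (by linarith)),
    abs_of_nonneg (by linarith), hexp]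
  nlinarith [one_sub_le_exp_neg (a - b), exp_le_one_iff.2 (neg_nonpos.2 hb), exp_pos (-b)]

lemma continuous_integral_left {g : ℝ → ℝ} (hg : Continuous g) (t : ℝ) :
    Continuous fun s => ∫ τ in s..t, g τ :=
  (continuous_primitive (fun _ _ => hg.intervalIntegrable _ _) t).neg.congr fun s =>
    (integral_symm t s).symm

lemma abs_integral_sub_integral_le {g₁ g₂ : ℝ → ℝ} (hg₁ : Continuous g₁) (hg₂ : Continuous g₂)
    {s t : ℝ} (hs : 0 ≤ s) (hst : s ≤ t) :
    |(∫ τ in s..t, g₁ τ) - ∫ τ in s..t, g₂ τ| ≤ ∫ τ in (0:ℝ)..t, |g₁ τ - g₂ τ| := by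
  rw [← integral_sub (hg₁.intervalIntegrable s t) (hg₂.intervalIntegrable s t)]
  exact (abs_integral_le_integral_abs hst).trans <| integral_mono_interval hs hst le_rfl
    (Filter.Eventually.of_forall fun _ => abs_nonneg _) ((hg₁.sub hg₂).abs.intervalIntegrable 0 t)

/-- The variation-of-constants solution of `x' = f - g x`, `x 0 = x₀`. -/
noncomputable def vocSolution (x₀ : ℝ) (f g : ℝ → ℝ) (t : ℝ) : ℝ :=
  exp (-∫ τ in (0:ℝ)..t, g τ) * x₀ + ∫ s in (0:ℝ)..t, f s * exp (-∫ τ in s..t, g τ)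

lemma Npore_eq_vocSolution (α N₀ q V : ℝ) (v : ℝ → ℝ) (t : ℝ) :
    Npore α N₀ q V v t = vocSolution N₀ (fun s => α * exp ((v s / V) ^ 2))
      (fun τ => α / N₀ * exp ((1 - q) * (v τ / V) ^ 2)) t := rfl

section vocSolution

variable {f₁ f₂ g₁ g₂ : ℝ → ℝ} (hg₁ : Continuous g₁) (hg₂ : Continuous g₂)
  (hg₁_nonneg : ∀ s, 0 ≤ g₁ s) (hg₂_nonneg : ∀ s, 0 ≤ g₂ s)
include hg₁ hg₂ hg₁_nonneg hg₂_nonneg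

lemma abs_exp_integral_sub_le {s t : ℝ} (hs : 0 ≤ s) (hst : s ≤ t) :
    |exp (-∫ τ in s..t, g₁ τ) - exp (-∫ τ in s..t, g₂ τ)| ≤ ∫ τ in (0:ℝ)..t, |g₁ τ - g₂ τ| :=
  (abs_exp_neg_sub_exp_neg_le (integral_nonneg hst fun τ _ => hg₁_nonneg τ)
    (integral_nonneg hst fun τ _ => hg₂_nonneg τ)).trans
    (abs_integral_sub_integral_le hg₁ hg₂ hs hst)

lemma abs_integral_forcing_sub_le (hf₁ : Continuous f₁) (hf₂ : Continuous f₂) {F t : ℝ}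
    (hF : ∀ s, |f₁ s| ≤ F) (ht : 0 ≤ t) :
    |(∫ s in (0:ℝ)..t, f₁ s * exp (-∫ τ in s..t, g₁ τ)) -
        ∫ s in (0:ℝ)..t, f₂ s * exp (-∫ τ in s..t, g₂ τ)| ≤
      t * F * (∫ τ in (0:ℝ)..t, |g₁ τ - g₂ τ|) + ∫ s in (0:ℝ)..t, |f₁ s - f₂ s| := by
  set D := ∫ τ in (0:ℝ)..t, |g₁ τ - g₂ τ|
  have hh : ∀ {f g : ℝ → ℝ}, Continuous f → Continuous g →
      Continuous fun s => f s * exp (-∫ τ in s..t, g τ) := fun hf hg =>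
    hf.mul (continuous_integral_left hg t).neg.rexp
  have hpointwise : ∀ s ∈ Icc (0:ℝ) t,
      |f₁ s * exp (-∫ τ in s..t, g₁ τ) - f₂ s * exp (-∫ τ in s..t, g₂ τ)| ≤
        F * D + |f₁ s - f₂ s| := by
    rintro s ⟨hs, hst⟩
    have he : exp (-∫ τ in s..t, g₂ τ) ≤ 1 :=
      exp_le_one_iff.2 (neg_nonpos.2 (integral_nonneg hst fun τ _ => hg₂_nonneg τ))
    calc _ = |f₁ s * (exp (-∫ τ in s..t, g₁ τ) - exp (-∫ τ in s..t, g₂ τ)) +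
            (f₁ s - f₂ s) * exp (-∫ τ in s..t, g₂ τ)| := by ring_nf
      _ ≤ |f₁ s| * |exp (-∫ τ in s..t, g₁ τ) - exp (-∫ τ in s..t, g₂ τ)| +
            |f₁ s - f₂ s| * exp (-∫ τ in s..t, g₂ τ) := by
          grw [abs_add_le, abs_mul, abs_mul, abs_of_pos (exp_pos _)]
      _ ≤ F * D + |f₁ s - f₂ s| * 1 := by
          gcongr
          · exact (abs_nonneg _).trans (hF s)
          · exact hF s
          · exact abs_exp_integral_sub_le hg₁ hg₂ hg₁_nonneg hg₂_nonneg hs hst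
      _ = F * D + |f₁ s - f₂ s| := by rw [mul_one]
  rw [← integral_sub ((hh hf₁ hg₁).intervalIntegrable 0 t) ((hh hf₂ hg₂).intervalIntegrable 0 t)]
  calc _ ≤ ∫ s in (0:ℝ)..t,
          |f₁ s * exp (-∫ τ in s..t, g₁ τ) - f₂ s * exp (-∫ τ in s..t, g₂ τ)| :=
        abs_integral_le_integral_abs ht
    _ ≤ ∫ s in (0:ℝ)..t, (F * D + |f₁ s - f₂ s|) :=
        integral_mono_on ht (((hh hf₁ hg₁).sub (hh hf₂ hg₂)).abs.intervalIntegrable 0 t)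
          (Continuous.intervalIntegrable (by fun_prop) 0 t) hpointwise
    _ = t * F * D + ∫ s in (0:ℝ)..t, |f₁ s - f₂ s| := by
        rw [integral_add intervalIntegrable_const (Continuous.intervalIntegrable (by fun_prop) 0 t),
          intervalIntegral.integral_const, smul_eq_mul, sub_zero, mul_assoc]

lemma abs_vocSolution_sub_le (hf₁ : Continuous f₁) (hf₂ : Continuous f₂) (x₀ : ℝ) {F t : ℝ}
    (hF : ∀ s, |f₁ s| ≤ F) (ht : 0 ≤ t) :
    |vocSolution x₀ f₁ g₁ t - vocSolution x₀ f₂ g₂ t| ≤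
      (|x₀| + t * F) * (∫ τ in (0:ℝ)..t, |g₁ τ - g₂ τ|) + ∫ s in (0:ℝ)..t, |f₁ s - f₂ s| := by
  have hinit : |exp (-∫ τ in (0:ℝ)..t, g₁ τ) * x₀ - exp (-∫ τ in (0:ℝ)..t, g₂ τ) * x₀| ≤
      |x₀| * ∫ τ in (0:ℝ)..t, |g₁ τ - g₂ τ| := by
    rw [← sub_mul, abs_mul, mul_comm]
    gcongr
    exact abs_exp_integral_sub_le hg₁ hg₂ hg₁_nonneg hg₂_nonneg le_rfl ht
  have hforcing := abs_integral_forcing_sub_le hg₁ hg₂ hg₁_nonneg hg₂_nonneg hf₁ hf₂ hF ht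
  rw [vocSolution, vocSolution, add_sub_add_comm]
  linarith [abs_add_le (exp (-∫ τ in (0:ℝ)..t, g₁ τ) * x₀ - exp (-∫ τ in (0:ℝ)..t, g₂ τ) * x₀)
    ((∫ s in (0:ℝ)..t, f₁ s * exp (-∫ τ in s..t, g₁ τ)) -
        ∫ s in (0:ℝ)..t, f₂ s * exp (-∫ τ in s..t, g₂ τ))]

end vocSolution

lemma sq_integral_le_mul_integral_sq {u : ℝ → ℝ} (hu : Continuous u) {t : ℝ} (ht : 0 ≤ t) :
    (∫ s in (0:ℝ)..t, u s) ^ 2 ≤ t * ∫ s in (0:ℝ)..t, u s ^ 2 := by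
  rcases ht.eq_or_lt with rfl | ht
  · simp
  set I := ∫ s in (0:ℝ)..t, u s
  set J := ∫ s in (0:ℝ)..t, u s ^ 2
  have hvar : 0 ≤ ∫ s in (0:ℝ)..t, (t * u s - I) ^ 2 :=
    integral_nonneg ht.le fun _ _ => sq_nonneg _
  have hexpand : ∫ s in (0:ℝ)..t, (t * u s - I) ^ 2 = t * (t * J - I ^ 2) := by
    have hI : IntervalIntegrable u volume 0 t := hu.intervalIntegrable 0 t
    have hJ : IntervalIntegrable (fun s => u s ^ 2) volume 0 t :=
      (hu.pow 2).intervalIntegrable 0 t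
    have hpt : ∀ s, (t * u s - I) ^ 2 = t ^ 2 * u s ^ 2 - 2 * t * I * u s + I ^ 2 := fun s => by
      ring
    simp_rw [hpt]
    rw [integral_add ((hJ.const_mul _).sub (hI.const_mul _)) intervalIntegrable_const,
      integral_sub (hJ.const_mul _) (hI.const_mul _), intervalIntegral.integral_const_mul,
      intervalIntegral.integral_const_mul, intervalIntegral.integral_const, smul_eq_mul]
    ring
  nlinarith

lemma integral_abs_comp_sub_le {φ : ℝ → ℝ} {K : NNReal} (hφ : LipschitzWith K φ)
    {w₁ w₂ : ℝ → ℝ} (hw₁ : Continuous w₁) (hw₂ : Continuous w₂) {t : ℝ} (ht : 0 ≤ t) :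
    ∫ s in (0:ℝ)..t, |φ (w₁ s) - φ (w₂ s)| ≤ K * ∫ s in (0:ℝ)..t, |w₁ s - w₂ s| := by
  rw [← intervalIntegral.integral_const_mul]
  refine integral_mono_on ht ?_ ?_ fun s _ => ?_
  · exact ((hφ.continuous.comp hw₁).sub (hφ.continuous.comp hw₂)).abs.intervalIntegrable 0 t
  · exact ((hw₁.sub hw₂).abs.const_mul _).intervalIntegrable 0 t
  · simpa only [Real.dist_eq] using hφ.dist_le_mul (w₁ s) (w₂ s)

lemma exists_abs_Npore_cut_sub_le (α N₀ q V T M : ℝ) (hα : 0 < α) (hN₀ : 0 < N₀) (hM : 0 ≤ M) :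
    ∃ K, ∀ v₁ v₂ : ℝ → ℝ, Continuous v₁ → Continuous v₂ → ∀ t ∈ Icc (0:ℝ) T,
      |Npore α N₀ q V (fun s => cut M (v₁ s)) t - Npore α N₀ q V (fun s => cut M (v₂ s)) t| ≤
        K * ∫ s in (0:ℝ)..t, |v₁ s - v₂ s| := by
  set f : ℝ → ℝ := fun x => α * exp ((x / V) ^ 2)
  set g : ℝ → ℝ := fun x => α / N₀ * exp ((1 - q) * (x / V) ^ 2)
  obtain ⟨Kf, hKf⟩ := exists_lipschitzWith_comp_cut hM (φ := f) (by fun_prop)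
  obtain ⟨Kg, hKg⟩ := exists_lipschitzWith_comp_cut hM (φ := g) (by fun_prop)
  obtain ⟨F, hF⟩ := exists_bound_comp_cut hM (φ := f) (by fun_prop)
  have hF_nonneg : 0 ≤ F := (abs_nonneg _).trans (hF 0)
  refine ⟨(|N₀| + T * F) * Kg + Kf, fun v₁ v₂ hv₁ hv₂ t ⟨ht, htT⟩ => ?_⟩
  have hcut : Continuous (cut M) := (lipschitzWith_cut hM).continuous
  have hg_nonneg : ∀ x, 0 ≤ g x := fun x => by positivity
  rw [Npore_eq_vocSolution, Npore_eq_vocSolution]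
  calc _ ≤ (|N₀| + t * F) * (∫ s in (0:ℝ)..t, |g (cut M (v₁ s)) - g (cut M (v₂ s))|) +
        ∫ s in (0:ℝ)..t, |f (cut M (v₁ s)) - f (cut M (v₂ s))| :=
        abs_vocSolution_sub_le (by fun_prop) (by fun_prop) (fun s => hg_nonneg _)
          (fun s => hg_nonneg _) (by fun_prop) (by fun_prop) N₀ (fun s => hF (v₁ s)) ht
    _ ≤ (|N₀| + T * F) * (Kg * ∫ s in (0:ℝ)..t, |v₁ s - v₂ s|) +
        Kf * ∫ s in (0:ℝ)..t, |v₁ s - v₂ s| :=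
        add_le_add (mul_le_mul (by gcongr) (integral_abs_comp_sub_le hKg hv₁ hv₂ ht)
          (integral_nonneg ht fun _ _ => abs_nonneg _)
          (add_nonneg (abs_nonneg _) (mul_nonneg (ht.trans htT) hF_nonneg)))
          (integral_abs_comp_sub_le hKf hv₁ hv₂ ht)
    _ = _ := by ring

theorem stmt6_general (α N₀ q V T M : ℝ) (hα : 0 < α) (hN₀ : 0 < N₀)
    (hT : 0 < T) (hM : 0 < M) :
    ∃ L > (0:ℝ), ∀ v₁ v₂ : ℝ → ℝ, Continuous v₁ → Continuous v₂ →
      ∀ t ∈ Set.Icc (0:ℝ) T,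
        |Npore α N₀ q V (fun s => cut M (v₁ s)) t -
            Npore α N₀ q V (fun s => cut M (v₂ s)) t| ^ 2 ≤
          L * ∫ s in (0:ℝ)..t, |v₁ s - v₂ s| ^ 2 := by
  obtain ⟨K, hK⟩ := exists_abs_Npore_cut_sub_le α N₀ q V T M hα hN₀ hM.le
  refine ⟨K ^ 2 * T + 1, by positivity, fun v₁ v₂ hv₁ hv₂ t ht => ?_⟩
  have hJ : 0 ≤ ∫ s in (0:ℝ)..t, |v₁ s - v₂ s| ^ 2 :=
    integral_nonneg ht.1 fun _ _ => by positivity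
  calc _ ≤ (K * ∫ s in (0:ℝ)..t, |v₁ s - v₂ s|) ^ 2 :=
        pow_le_pow_left₀ (abs_nonneg _) (hK v₁ v₂ hv₁ hv₂ t ht) 2
    _ = K ^ 2 * (∫ s in (0:ℝ)..t, |v₁ s - v₂ s|) ^ 2 := by ring
    _ ≤ K ^ 2 * (t * ∫ s in (0:ℝ)..t, |v₁ s - v₂ s| ^ 2) := by
        gcongr
        exact sq_integral_le_mul_integral_sq (hv₁.sub hv₂).abs ht.1
    _ ≤ K ^ 2 * (T * ∫ s in (0:ℝ)..t, |v₁ s - v₂ s| ^ 2) := by gcongr; exact ht.2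
    _ ≤ (K ^ 2 * T + 1) * ∫ s in (0:ℝ)..t, |v₁ s - v₂ s| ^ 2 := by nlinarith

theorem stmt6 (α N₀ q V T M : ℝ) (hα : 0 < α) (hN₀ : 0 < N₀) (hq : 0 < q) (hV : 0 < V)
    (hT : 0 < T) (hM : 0 < M) :
    ∃ L > (0:ℝ), ∀ v₁ v₂ : ℝ → ℝ, Continuous v₁ → Continuous v₂ →
      ∀ t ∈ Set.Icc (0:ℝ) T,
        |Npore α N₀ q V (fun s => cut M (v₁ s)) t -
            Npore α N₀ q V (fun s => cut M (v₂ s)) t| ^ 2 ≤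
          L * ∫ s in (0:ℝ)..t, |v₁ s - v₂ s| ^ 2 :=
  stmt6_general α N₀ q V T M hα hN₀ hT hM
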